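/- (Adaptive sampling bound, column version.) Let A ∈ ℝ^{m×n}, and let R ∈ ℝ^{r×n} consist of rows of A with rank(R) = rank(A R⁺ R) = ρ. Let C₁ ∈ ℝ^{m×c₁} consist of c₁ columns of A, set B = A − C₁C₁⁺A, and define sampling probabilities p_i = ‖b_i‖₂²/‖B‖_F² over columns i = 1,…,n. Sample c₂ columns of A i.i.d. according to (p_i), forming C₂, and set C = [C₁, C₂]. Then E‖A − C C⁺ A R⁺ R‖_F² ≤ ‖A − A R⁺ R‖_F² + (ρ/c₂)·‖A − C₁C₁⁺A‖_F², where the expectation is over C₂. -/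

import Mathlib

/-!
Write `Q = R⁺R`, an orthogonal projection of rank `ρ` with rows `qᵢ`, and `P = CC⁺`. Pythagoras
splits `‖A - PAQ‖²` into `‖A - AQ‖² + ‖AQ - PAQ‖²`, and the second term is at most `‖AQ - Y‖²`
for every `Y` in the column space of `C`. Take `Y = C₁C₁⁺AQ + (1/c₂) ∑ₗ b_{fₗ} q_{fₗ}ᵀ / p_{fₗ}`:
then `AQ - Y` is `BQ` minus the mean of `c₂` independent copies of the unbiased estimator
`bᵢ qᵢᵀ / pᵢ` of `BQ`, whose expected squared error is at most
`(1/c₂) ∑ᵢ ‖bᵢ‖² ‖qᵢ‖² / pᵢ = (1/c₂) ‖B‖_F² ‖Q‖_F² = (ρ/c₂) ‖B‖_F²`.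
-/

open Matrix BigOperators

def IsMPInv {m n : Type*} [Fintype m] [Fintype n] (A : Matrix m n ℝ) (B : Matrix n m ℝ) : Prop :=
  A * B * A = A ∧ B * A * B = B ∧ (A * B)ᵀ = A * B ∧ (B * A)ᵀ = B * A

-- The Moore-Penrose pseudoinverse (it exists and is unique for real matrices).
open Classical in
noncomputable def mpinv {m n : Type*} [Fintype m] [Fintype n] (A : Matrix m n ℝ) : Matrix n m ℝ :=
  if h : ∃ B, IsMPInv A B then h.choose else 0

/-- Squared Frobenius norm. -/
def frobSq {m n : Type*} [Fintype m] [Fintype n] (A : Matrix m n ℝ) : ℝ :=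
  ∑ i, ∑ j, (A i j) ^ 2

/-- Frobenius norm. -/
noncomputable def frob {m n : Type*} [Fintype m] [Fintype n] (A : Matrix m n ℝ) : ℝ :=
  Real.sqrt (frobSq A)

section PseudoInverse

variable {m n : Type*} [Fintype m] [Fintype n]

lemma Matrix.cfc_mul_cfc_mul_cfc [DecidableEq n] (S : Matrix n n ℝ) (f g h : ℝ → ℝ) :
    cfc f S * cfc g S * cfc h S = cfc (fun x => f x * g x * h x) S := by
  have hc : ∀ f : ℝ → ℝ, ContinuousOn f (spectrum ℝ S) := (finite_spectrum S).continuousOn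
  rw [← cfc_mul _ _ S (hc _) (hc _), ← cfc_mul _ _ S (hc _) (hc _)]

/-- `A⁺ = (AᵀA)⁺Aᵀ`, where the pseudoinverse of the symmetric matrix `AᵀA` inverts its nonzero
eigenvalues. -/
lemma exists_isMPInv (A : Matrix m n ℝ) : ∃ B, IsMPInv A B := by
  classical
  set G := Aᵀ * A
  have hGt : Gᵀ = G := by simp [G]
  have hG : IsSelfAdjoint G := by
    rwa [IsSelfAdjoint, star_eq_conjTranspose, conjTranspose_eq_transpose_of_trivial]
  set T := cfc (·⁻¹ : ℝ → ℝ) G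
  have hGTG : G * T * G = G := by
    simpa [mul_inv_mul_cancel, cfc_id' ℝ G hG] using
      cfc_mul_cfc_mul_cfc G (fun x => x) (·⁻¹) (fun x => x)
  have hinv (x : ℝ) : x⁻¹ * x * x⁻¹ = x⁻¹ := by simpa using mul_inv_mul_cancel x⁻¹
  have hTGT : T * G * T = T := by
    simpa [hinv, cfc_id' ℝ G hG] using
      cfc_mul_cfc_mul_cfc G (·⁻¹) (fun x => x) (·⁻¹)
  have hTt : Tᵀ = T := by
    simpa [IsSelfAdjoint, star_eq_conjTranspose, conjTranspose_eq_transpose_of_trivial] using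
      (cfc_predicate (·⁻¹ : ℝ → ℝ) G : IsSelfAdjoint T)
  have hTG : T * G = G * T := by
    simpa [cfc_id' ℝ G hG] using (cfc_commute_cfc (·⁻¹ : ℝ → ℝ) (fun x => x) G).eq
  have hATG : A * (T * G) = A := by
    have hGK : G * (1 - T * G) = 0 := by
      rw [Matrix.mul_sub, Matrix.mul_one, ← Matrix.mul_assoc, hGTG, sub_self]
    -- `(AK)ᵀ(AK) = Kᵀ G K` vanishes for `K = 1 - TG`, hence so does `AK`
    have hAK : (A * (1 - T * G))ᴴ * (A * (1 - T * G)) = 0 := by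
      rw [conjTranspose_eq_transpose_of_trivial, transpose_mul, Matrix.mul_assoc,
        ← Matrix.mul_assoc Aᵀ, hGK, Matrix.mul_zero]
    rw [conjTranspose_mul_self_eq_zero, Matrix.mul_sub, Matrix.mul_one, sub_eq_zero] at hAK
    exact hAK.symm
  refine ⟨T * Aᵀ, ?_, ?_, ?_, ?_⟩
  · simpa only [Matrix.mul_assoc] using hATG
  · rw [show T * Aᵀ * A * (T * Aᵀ) = T * G * T * Aᵀ by simp only [G, Matrix.mul_assoc], hTGT]
  · rw [transpose_mul, transpose_mul, transpose_transpose, hTt, Matrix.mul_assoc]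
  · rw [Matrix.mul_assoc, transpose_mul, hTt, hGt, ← hTG]

lemma isMPInv_mpinv (A : Matrix m n ℝ) : IsMPInv A (mpinv A) := by
  rw [mpinv, dif_pos (exists_isMPInv A)]
  exact (exists_isMPInv A).choose_spec

end PseudoInverse

section Frobenius

variable {m n : Type*} [Fintype m] [Fintype n]

lemma frobSq_nonneg (X : Matrix m n ℝ) : 0 ≤ frobSq X := by
  unfold frobSq; positivity

lemma frobSq_eq_trace (X : Matrix m n ℝ) : frobSq X = trace (X * Xᵀ) := by
  simp [frobSq, trace, mul_apply, sq]

lemma frobSq_transpose (X : Matrix m n ℝ) : frobSq Xᵀ = frobSq X :=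
  Finset.sum_comm

lemma frobSq_smul (a : ℝ) (X : Matrix m n ℝ) : frobSq (a • X) = a ^ 2 * frobSq X := by
  simp [frobSq, Finset.mul_sum, mul_pow]

lemma frobSq_vecMulVec (u : m → ℝ) (v : n → ℝ) :
    frobSq (vecMulVec u v) = (∑ i, u i ^ 2) * ∑ j, v j ^ 2 := by
  simp [frobSq, vecMulVec_apply, Finset.sum_mul_sum, mul_pow]

lemma frobSq_add_of_mul_transpose_eq_zero {X Y : Matrix m n ℝ} (h : X * Yᵀ = 0) :
    frobSq (X + Y) = frobSq X + frobSq Y := by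
  have h' : Y * Xᵀ = 0 := by rw [← transpose_transpose (Y * Xᵀ), transpose_mul,
    transpose_transpose, h, transpose_zero]
  simp only [frobSq_eq_trace, transpose_add, Matrix.add_mul, Matrix.mul_add, h, h', trace_add,
    trace_zero]
  ring

lemma frobSq_add_of_transpose_mul_eq_zero {X Y : Matrix m n ℝ} (h : Xᵀ * Y = 0) :
    frobSq (X + Y) = frobSq X + frobSq Y := by
  rw [← frobSq_transpose, transpose_add, frobSq_add_of_mul_transpose_eq_zero
    (by rwa [transpose_transpose]), frobSq_transpose, frobSq_transpose]

variable {P : Matrix m m ℝ} {Q : Matrix n n ℝ}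

lemma frobSq_sub_mul_mul_proj (hQt : Qᵀ = Q) (hQQ : Q * Q = Q) (X : Matrix m n ℝ) :
    frobSq (X - P * X * Q) = frobSq (X - X * Q) + frobSq (X * Q - P * X * Q) := by
  have hperp : (X - X * Q) * (X * Q - P * X * Q)ᵀ = 0 := by
    rw [← Matrix.sub_mul, transpose_mul, hQt, ← Matrix.mul_assoc, Matrix.sub_mul,
      Matrix.mul_assoc, hQQ, sub_self, Matrix.zero_mul]
  rw [← frobSq_add_of_mul_transpose_eq_zero hperp, sub_add_sub_cancel]

lemma frobSq_sub_proj_mul_le (hPt : Pᵀ = P) (hPP : P * P = P) (X G : Matrix m n ℝ) :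
    frobSq (X - P * X) ≤ frobSq (X - P * G) := by
  have hsplit : X - P * G = (X - P * X) + P * (X - G) := by
    rw [Matrix.mul_sub]; abel
  rw [hsplit, frobSq_add_of_transpose_mul_eq_zero]
  · linarith [frobSq_nonneg (P * (X - G))]
  · rw [transpose_sub, transpose_mul, hPt, Matrix.sub_mul, Matrix.mul_assoc, ← Matrix.mul_assoc P,
      hPP, sub_self]

end Frobenius

lemma Matrix.trace_eq_rank_of_mul_self {K n : Type*} [Field K] [Fintype n] [DecidableEq n]
    {Q : Matrix n n K} (hQQ : Q * Q = Q) : Q.trace = Q.rank := by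
  have hidem : IsIdempotentElem Q.mulVecLin := by
    rw [IsIdempotentElem, Module.End.mul_eq_comp, ← mulVecLin_mul, hQQ]
  rw [← trace_toLin'_eq, toLin'_apply',
    ((LinearMap.isProj_range_iff_isIdempotentElem _).mpr hidem).trace, rank]

lemma frobSq_eq_rank_of_proj {n : Type*} [Fintype n] [DecidableEq n] {Q : Matrix n n ℝ}
    (hQt : Qᵀ = Q) (hQQ : Q * Q = Q) : frobSq Q = Q.rank := by
  rw [frobSq_eq_trace, hQt, hQQ, trace_eq_rank_of_mul_self hQQ]

section Projections

variable {m n k : Type*} [Fintype m] [Fintype n] [Fintype k]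

lemma transpose_mul_mpinv (A : Matrix m n ℝ) : (A * mpinv A)ᵀ = A * mpinv A :=
  (isMPInv_mpinv A).2.2.1

lemma mul_mpinv_mul_mul_mpinv (A : Matrix m n ℝ) :
    A * mpinv A * (A * mpinv A) = A * mpinv A := by
  rw [← Matrix.mul_assoc, (isMPInv_mpinv A).1]

lemma transpose_mpinv_mul (A : Matrix m n ℝ) : (mpinv A * A)ᵀ = mpinv A * A :=
  (isMPInv_mpinv A).2.2.2

lemma mpinv_mul_mul_mpinv_mul (A : Matrix m n ℝ) :
    mpinv A * A * (mpinv A * A) = mpinv A * A := by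
  rw [← Matrix.mul_assoc, (isMPInv_mpinv A).2.1]

lemma rank_mpinv_mul (A : Matrix m n ℝ) : (mpinv A * A).rank = A.rank := by
  refine le_antisymm (rank_mul_le_right _ _) ?_
  calc A.rank = (A * (mpinv A * A)).rank := by rw [← Matrix.mul_assoc, (isMPInv_mpinv A).1]
    _ ≤ (mpinv A * A).rank := rank_mul_le_right _ _

lemma frobSq_mpinv_mul [DecidableEq n] (A : Matrix m n ℝ) : frobSq (mpinv A * A) = A.rank := by
  rw [frobSq_eq_rank_of_proj (transpose_mpinv_mul A) (mpinv_mul_mul_mpinv_mul A), rank_mpinv_mul]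

lemma frobSq_sub_mul_mpinv_mul_le (C : Matrix m k ℝ) (X : Matrix m n ℝ) (N : Matrix k n ℝ) :
    frobSq (X - C * mpinv C * X) ≤ frobSq (X - C * N) := by
  have hCN : C * mpinv C * (C * N) = C * N := by rw [← Matrix.mul_assoc, (isMPInv_mpinv C).1]
  simpa only [hCN] using
    frobSq_sub_proj_mul_le (transpose_mul_mpinv C) (mul_mpinv_mul_mul_mpinv C) X (C * N)

end Projections

noncomputable section IidExpectation

variable {ι : Type*} [Fintype ι] (p : ι → ℝ) {c : ℕ}

/-- The expectation of `g` over `c` independent draws from the distribution `p` on `ι`. -/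
def iidExpect (c : ℕ) (g : (Fin c → ι) → ℝ) : ℝ :=
  ∑ f : Fin c → ι, (∏ l, p (f l)) * g f

lemma iidExpect_add (g h : (Fin c → ι) → ℝ) :
    iidExpect p c (fun f => g f + h f) = iidExpect p c g + iidExpect p c h := by
  simp only [iidExpect, mul_add, Finset.sum_add_distrib]

lemma iidExpect_mul_left (a : ℝ) (g : (Fin c → ι) → ℝ) :
    iidExpect p c (fun f => a * g f) = a * iidExpect p c g := by
  simp only [iidExpect, Finset.mul_sum, mul_left_comm]

lemma iidExpect_sum {κ : Type*} (s : Finset κ) (g : κ → (Fin c → ι) → ℝ) :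
    iidExpect p c (fun f => ∑ j ∈ s, g j f) = ∑ j ∈ s, iidExpect p c (g j) := by
  simp only [iidExpect, Finset.mul_sum]
  exact Finset.sum_comm

lemma iidExpect_const (a : ℝ) : iidExpect p c (fun _ => a) = (∑ i, p i) ^ c * a := by
  rw [iidExpect, ← Finset.sum_mul, ← Fintype.prod_sum (fun (_ : Fin c) i => p i),
    Finset.prod_const, Finset.card_univ, Fintype.card_fin]

lemma iidExpect_mono (hp : ∀ i, 0 ≤ p i) {g h : (Fin c → ι) → ℝ} (hgh : ∀ f, g f ≤ h f) :
    iidExpect p c g ≤ iidExpect p c h :=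
  Finset.sum_le_sum fun f _ =>
    mul_le_mul_of_nonneg_left (hgh f) (Finset.prod_nonneg fun l _ => hp (f l))

lemma iidExpect_succ (g : (Fin (c + 1) → ι) → ℝ) :
    iidExpect p (c + 1) g = ∑ i, p i * iidExpect p c (fun f => g (Fin.cons i f)) := by
  rw [iidExpect, ← (Fin.consEquiv fun _ => ι).sum_comp, Fintype.sum_prod_type]
  simp only [Fin.prod_univ_succ, mul_assoc, iidExpect, Finset.mul_sum]
  rfl

variable {p}

lemma iidExpect_sum_comp (hp : ∑ i, p i = 1) (z : ι → ℝ) :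
    iidExpect p c (fun f => ∑ l, z (f l)) = c * ∑ i, p i * z i := by
  induction c with
  | zero => simp [iidExpect]
  | succ c ih =>
    simp only [iidExpect_succ, Fin.sum_univ_succ, Fin.cons_zero, Fin.cons_succ, iidExpect_add, ih,
      iidExpect_const, hp, one_pow, one_mul, mul_add, Finset.sum_add_distrib, ← Finset.sum_mul]
    push_cast; ring

lemma iidExpect_sq_sum_comp (hp : ∑ i, p i = 1) {z : ι → ℝ} (hz : ∑ i, p i * z i = 0) :
    iidExpect p c (fun f => (∑ l, z (f l)) ^ 2) = c * ∑ i, p i * z i ^ 2 := by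
  induction c with
  | zero => simp [iidExpect]
  | succ c ih =>
    have hexp : ∀ i (f : Fin c → ι), (∑ l, z ((Fin.cons i f : Fin (c + 1) → ι) l)) ^ 2
        = z i ^ 2 + (2 * z i) * ∑ l, z (f l) + (∑ l, z (f l)) ^ 2 := by
      intro i f; simp only [Fin.sum_univ_succ, Fin.cons_zero, Fin.cons_succ]; ring
    simp only [iidExpect_succ, hexp, iidExpect_add, iidExpect_mul_left, iidExpect_sum_comp hp,
      ih, hz, iidExpect_const, hp, one_pow, one_mul, mul_zero, mul_add, Finset.sum_add_distrib]
    rw [Finset.sum_const_zero, ← Finset.sum_mul, hp]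
    push_cast; ring

lemma iidExpect_sq_mean_sub_avg (hp : ∑ i, p i = 1) (hc : c ≠ 0) (x : ι → ℝ) :
    iidExpect p c (fun f => (∑ i, p i * x i - (c : ℝ)⁻¹ * ∑ l, x (f l)) ^ 2)
      = (∑ i, p i * x i ^ 2 - (∑ i, p i * x i) ^ 2) / c := by
  set μ := ∑ i, p i * x i
  have hcent : ∑ i, p i * (x i - μ) = 0 := by
    simp only [mul_sub, Finset.sum_sub_distrib, ← Finset.sum_mul, hp, one_mul]
    exact sub_self μ
  have hrw : ∀ f : Fin c → ι, (μ - (c : ℝ)⁻¹ * ∑ l, x (f l)) ^ 2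
      = ((c : ℝ)⁻¹) ^ 2 * (∑ l, (x (f l) - μ)) ^ 2 := by
    intro f
    rw [Finset.sum_sub_distrib, Finset.sum_const, Finset.card_univ, Fintype.card_fin, nsmul_eq_mul]
    field_simp
    ring
  simp only [hrw, iidExpect_mul_left, iidExpect_sq_sum_comp hp hcent]
  have hvar : ∑ i, p i * (x i - μ) ^ 2 = ∑ i, p i * x i ^ 2 - μ ^ 2 := by
    have hexp : ∀ i, p i * (x i - μ) ^ 2 = p i * x i ^ 2 - 2 * μ * (p i * x i) + μ ^ 2 * p i := by
      intro i; ring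
    simp only [hexp, Finset.sum_add_distrib, Finset.sum_sub_distrib, ← Finset.mul_sum, hp]
    ring
  rw [hvar]
  field_simp

lemma iidExpect_frobSq_mean_sub_avg_le {m n : Type*} [Fintype m] [Fintype n]
    (hp : ∑ i, p i = 1) (hc : c ≠ 0) (X : ι → Matrix m n ℝ) :
    iidExpect p c (fun f => frobSq (∑ i, p i • X i - (c : ℝ)⁻¹ • ∑ l, X (f l)))
      ≤ (∑ i, p i * frobSq (X i)) / c := by
  have hentry (a : m) (b : n) :
      iidExpect p c (fun f => ((∑ i, p i • X i - (c : ℝ)⁻¹ • ∑ l, X (f l)) a b) ^ 2)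
        ≤ (∑ i, p i * X i a b ^ 2) / c := by
    simp only [Matrix.sub_apply, Matrix.sum_apply, Matrix.smul_apply, smul_eq_mul]
    rw [iidExpect_sq_mean_sub_avg hp hc]
    gcongr
    linarith [sq_nonneg (∑ i, p i * X i a b)]
  calc iidExpect p c (fun f => frobSq (∑ i, p i • X i - (c : ℝ)⁻¹ • ∑ l, X (f l)))
      ≤ ∑ a, ∑ b, (∑ i, p i * X i a b ^ 2) / c := by
        simp only [frobSq, iidExpect_sum]
        exact Finset.sum_le_sum fun a _ => Finset.sum_le_sum fun b _ => hentry a b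
    _ = (∑ i, p i * frobSq (X i)) / c := by
        simp only [frobSq, ← Finset.sum_div, Finset.mul_sum]
        congr 1
        exact (Finset.sum_congr rfl fun a _ => Finset.sum_comm).trans Finset.sum_comm

end IidExpectation

noncomputable section Sampling

variable {m n n' ι : Type*}

def colProb [Fintype m] [Fintype n] (B : Matrix m n ℝ) (i : n) : ℝ :=
  (∑ t, (B t i) ^ 2) / frobSq B

lemma colProb_nonneg [Fintype m] [Fintype n] (B : Matrix m n ℝ) (i : n) : 0 ≤ colProb B i :=
  div_nonneg (by positivity) (frobSq_nonneg B)

lemma sum_colProb [Fintype m] [Fintype n] {B : Matrix m n ℝ} (hB : frobSq B ≠ 0) :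
    ∑ i, colProb B i = 1 := by
  simp only [colProb]
  rw [← Finset.sum_div, Finset.sum_comm]
  exact div_self hB

lemma iidExpect_colProb_of_frobSq_eq_zero [Fintype m] [Fintype n] {B : Matrix m n ℝ}
    (hB : frobSq B = 0) {c : ℕ} (hc : c ≠ 0) (g : (Fin c → n) → ℝ) :
    iidExpect (colProb B) c g = 0 := by
  have hzero (i : n) : colProb B i = 0 := by rw [colProb, hB, div_zero]
  refine Finset.sum_eq_zero fun f _ => ?_
  rw [Finset.prod_eq_zero (Finset.mem_univ (⟨0, Nat.pos_of_ne_zero hc⟩ : Fin c)) (hzero _), zero_mul]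

lemma apply_eq_zero_of_colProb_eq_zero [Fintype m] [Fintype n] {B : Matrix m n ℝ} {i : n}
    (hi : colProb B i = 0) (k : m) : B k i = 0 := by
  have hcol : ∑ t, B t i ^ 2 = 0 := by
    rcases div_eq_zero_iff.mp hi with h | h
    · exact h
    · have hle : ∑ t, B t i ^ 2 ≤ frobSq B := Finset.sum_le_sum fun t _ =>
        Finset.single_le_sum (fun j _ => sq_nonneg (B t j)) (Finset.mem_univ i)
      linarith [Finset.sum_nonneg fun t (_ : t ∈ Finset.univ) => sq_nonneg (B t i)]
  exact pow_eq_zero_iff two_ne_zero |>.mp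
    ((Finset.sum_eq_zero_iff_of_nonneg fun t _ => sq_nonneg _).mp hcol k (Finset.mem_univ k))

lemma inv_colProb_mul_le [Fintype m] [Fintype n] (B : Matrix m n ℝ) (i : n) :
    (colProb B i)⁻¹ * ∑ t, (B t i) ^ 2 ≤ frobSq B := by
  rcases eq_or_ne (∑ t, (B t i) ^ 2) 0 with h | h
  · rw [h, mul_zero]; exact frobSq_nonneg B
  · rw [colProb, inv_div, div_mul_cancel₀ _ h]

-- `p i = 0` only for zero columns of `B`, where the junk value `0⁻¹ = 0` does no harm.
def importanceSample (B : Matrix m n ℝ) (Q : Matrix n n' ℝ) (p : n → ℝ) (i : n) :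
    Matrix m n' ℝ :=
  (p i)⁻¹ • vecMulVec (fun k => B k i) (Q i)

lemma sum_colProb_smul_importanceSample [Fintype m] [Fintype n] (B : Matrix m n ℝ)
    (Q : Matrix n n' ℝ) :
    ∑ i, colProb B i • importanceSample B Q (colProb B) i = B * Q := by
  ext k j
  simp only [importanceSample, Matrix.sum_apply, Matrix.smul_apply, vecMulVec_apply, smul_eq_mul,
    mul_apply]
  refine Finset.sum_congr rfl fun i _ => ?_
  rcases eq_or_ne (colProb B i) 0 with h | h
  · rw [h, apply_eq_zero_of_colProb_eq_zero h]; ring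
  · field_simp

lemma sum_importanceSample_comp [Fintype ι] (B : Matrix m n ℝ) (Q : Matrix n n' ℝ) (p : n → ℝ)
    (f : ι → n) :
    ∑ l, importanceSample B Q p (f l)
      = B.submatrix id f * of fun l j => (p (f l))⁻¹ * Q (f l) j := by
  ext k j
  simp only [importanceSample, Matrix.sum_apply, Matrix.smul_apply, vecMulVec_apply, smul_eq_mul,
    mul_apply, submatrix_apply, id, of_apply]
  exact Finset.sum_congr rfl fun l _ => by ring

lemma sum_colProb_mul_frobSq_importanceSample_le [Fintype m] [Fintype n] [Fintype n']
    (B : Matrix m n ℝ) (Q : Matrix n n' ℝ) :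
    ∑ i, colProb B i * frobSq (importanceSample B Q (colProb B) i) ≤ frobSq B * frobSq Q := by
  have hterm (i : n) : colProb B i * frobSq (importanceSample B Q (colProb B) i)
      = (colProb B i)⁻¹ * (∑ t, (B t i) ^ 2) * ∑ j, Q i j ^ 2 := by
    rw [importanceSample, frobSq_smul, frobSq_vecMulVec]
    rcases eq_or_ne (colProb B i) 0 with h | h
    · simp [h]
    · field_simp
  calc ∑ i, colProb B i * frobSq (importanceSample B Q (colProb B) i)
      = ∑ i, (colProb B i)⁻¹ * (∑ t, (B t i) ^ 2) * ∑ j, Q i j ^ 2 :=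
        Finset.sum_congr rfl fun i _ => hterm i
    _ ≤ ∑ i, frobSq B * ∑ j, Q i j ^ 2 := Finset.sum_le_sum fun i _ =>
        mul_le_mul_of_nonneg_right (inv_colProb_mul_le B i) (by positivity)
    _ = frobSq B * frobSq Q := by rw [← Finset.mul_sum]; rfl

end Sampling

/-- `C₁ C₁⁺ A Q + B_f W` lies in the column space of `C`, so it competes with `C C⁺ A Q`. -/
lemma frobSq_sub_fromCols_mul_le {m n k ι : Type*} [Fintype m] [Fintype n] [Fintype k]
    [Fintype ι] {Q : Matrix n n ℝ} (hQt : Qᵀ = Q) (hQQ : Q * Q = Q) (A : Matrix m n ℝ)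
    (C₁ : Matrix m k ℝ) (f : ι → n) (W : Matrix ι n ℝ) :
    let C := fromCols C₁ (A.submatrix id f)
    let B := A - C₁ * mpinv C₁ * A
    frobSq (A - C * mpinv C * A * Q)
      ≤ frobSq (A - A * Q) + frobSq (B * Q - B.submatrix id f * W) := by
  intro C B
  have hBf : B.submatrix id f = A.submatrix id f - C₁ * mpinv C₁ * A.submatrix id f := by
    ext; simp [B, mul_apply]
  have hCN : C * fromRows (mpinv C₁ * (A * Q - A.submatrix id f * W)) W
      = A * Q - (B * Q - B.submatrix id f * W) := by
    rw [fromCols_mul_fromRows, hBf]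
    simp only [B, Matrix.sub_mul, Matrix.mul_sub, Matrix.mul_assoc]
    abel
  rw [frobSq_sub_mul_mul_proj hQt hQQ, add_le_add_iff_left, Matrix.mul_assoc _ A Q]
  simpa only [hCN, sub_sub_cancel] using
    frobSq_sub_mul_mpinv_mul_le C (A * Q) (fromRows (mpinv C₁ * (A * Q - A.submatrix id f * W)) W)

theorem stmt6_general {m n r c₁ c₂ ρ : ℕ} (hc₂ : 0 < c₂)
    (A : Matrix (Fin m) (Fin n) ℝ) (R : Matrix (Fin r) (Fin n) ℝ)
    (C₁ : Matrix (Fin m) (Fin c₁) ℝ)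
    (hrankR : R.rank = ρ)
    (B : Matrix (Fin m) (Fin n) ℝ) (hB : B = A - C₁ * mpinv C₁ * A)
    (p : Fin n → ℝ) (hp : ∀ i, p i = (∑ t, (B t i) ^ 2) / frobSq B)
    (C : (Fin c₂ → Fin n) → Matrix (Fin m) (Fin c₁ ⊕ Fin c₂) ℝ)
    (hC : ∀ f, C f = Matrix.of fun t j => Sum.elim (fun a => C₁ t a) (fun l => A t (f l)) j) :
    ∑ f : Fin c₂ → Fin n, (∏ l, p (f l)) *
        frobSq (A - C f * mpinv (C f) * A * mpinv R * R)
      ≤ frobSq (A - A * mpinv R * R) + ((ρ : ℝ) / c₂) * frobSq (A - C₁ * mpinv C₁ * A) := by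
  obtain rfl : p = colProb B := funext hp
  rw [← hB]
  simp only [Matrix.mul_assoc _ (mpinv R) R]
  set Q := mpinv R * R
  by_cases hS : frobSq B = 0
  · rw [← iidExpect, iidExpect_colProb_of_frobSq_eq_zero hS hc₂.ne', hS, mul_zero, add_zero]
    exact frobSq_nonneg _
  set X := importanceSample B Q (colProb B)
  have hsample (f : Fin c₂ → Fin n) : frobSq (A - C f * mpinv (C f) * A * Q)
      ≤ frobSq (A - A * Q) + frobSq (∑ i, colProb B i • X i - (c₂ : ℝ)⁻¹ • ∑ l, X (f l)) := by
    rw [sum_colProb_smul_importanceSample, sum_importanceSample_comp, ← Matrix.mul_smul,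
      show C f = fromCols C₁ (A.submatrix id f) from hC f, hB]
    exact frobSq_sub_fromCols_mul_le (transpose_mpinv_mul R) (mpinv_mul_mul_mpinv_mul R) A C₁ f _
  calc iidExpect (colProb B) c₂ (fun f => frobSq (A - C f * mpinv (C f) * A * Q))
      ≤ iidExpect (colProb B) c₂ (fun f => frobSq (A - A * Q)
          + frobSq (∑ i, colProb B i • X i - (c₂ : ℝ)⁻¹ • ∑ l, X (f l))) :=
        iidExpect_mono _ (colProb_nonneg B) hsample
    _ ≤ frobSq (A - A * Q) + (∑ i, colProb B i * frobSq (X i)) / c₂ := by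
        rw [iidExpect_add, iidExpect_const, sum_colProb hS, one_pow, one_mul]
        gcongr
        exact iidExpect_frobSq_mean_sub_avg_le (sum_colProb hS) hc₂.ne' X
    _ ≤ frobSq (A - A * Q) + frobSq B * frobSq Q / c₂ := by
        gcongr
        exact sum_colProb_mul_frobSq_importanceSample_le B Q
    _ = frobSq (A - A * Q) + ρ / c₂ * frobSq B := by
        rw [frobSq_mpinv_mul, hrankR]
        ring

/-- (Adaptive sampling bound, generalized version.) With `R` consisting of rows
of `A` such that `rank R = rank (A R⁺ R) = ρ`, `C₁` consisting of columns of `A`,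
residual `B = A - C₁C₁⁺A`, sampling probabilities `p_i = ‖b_i‖₂²/‖B‖_F²`, and `C = [C₁, C₂]`
where `C₂` consists of `c₂` columns of `A` sampled i.i.d. according to `p`,
`E‖A - C C⁺ A R⁺ R‖_F² ≤ ‖A - A R⁺ R‖_F² + (ρ/c₂) ‖A - C₁ C₁⁺ A‖_F²`. -/
theorem stmt6 {m n r c₁ c₂ ρ : ℕ} (hc₂ : 0 < c₂)
    (A : Matrix (Fin m) (Fin n) ℝ) (R : Matrix (Fin r) (Fin n) ℝ)
    (C₁ : Matrix (Fin m) (Fin c₁) ℝ)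
    (hR : ∀ i, ∃ j, ∀ t, R i t = A j t)
    (hC₁ : ∀ j, ∃ i, ∀ t, C₁ t j = A t i)
    (hrankR : R.rank = ρ) (hrankAR : (A * mpinv R * R).rank = ρ)
    (B : Matrix (Fin m) (Fin n) ℝ) (hB : B = A - C₁ * mpinv C₁ * A)
    (p : Fin n → ℝ) (hp : ∀ i, p i = (∑ t, (B t i) ^ 2) / frobSq B)
    (C : (Fin c₂ → Fin n) → Matrix (Fin m) (Fin c₁ ⊕ Fin c₂) ℝ)
    (hC : ∀ f, C f = Matrix.of fun t j => Sum.elim (fun a => C₁ t a) (fun l => A t (f l)) j) :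
    ∑ f : Fin c₂ → Fin n, (∏ l, p (f l)) *
        frobSq (A - C f * mpinv (C f) * A * mpinv R * R)
      ≤ frobSq (A - A * mpinv R * R) + ((ρ : ℝ) / c₂) * frobSq (A - C₁ * mpinv C₁ * A) :=
  stmt6_general hc₂ A R C₁ hrankR B hB p hp C hC
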